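/- arXiv:0704.2763 — 3 statements merged into one kernel-verified Lean document; each statement's English description precedes it below -/
import Mathlib

section
/- Let K be a compact abelian Lie group and let K₁ denote the connected component of the identity element of K. Then there is a bicontinuous group isomorphism K₁ × π₀(K) ≅ K, where π₀(K) is the (finite) group of connected components of K. -/
/-!
The power map `x ↦ x ^ k` of a Lie group has derivative `k • id` at `1`, so for `k ≠ 0` the
inverse function theorem makes it map neighbourhoods of `1` onto neighbourhoods of `1`. In an
abelian group the `k`-th powers of the identity component `K₁` then form an open, hence clopen,
subgroup of `K₁`, so `K₁` is divisible. Divisible abelian groups are injective, so `K₁` admits a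
retraction `r : K →* K₁`, and `x ↦ (r x, x K₁)` is an isomorphism `K ≃* K₁ × K ⧸ K₁`. As `K` is
locally connected, `K₁` is open and `K ⧸ K₁` is discrete, which makes `r` and the inverse
isomorphism continuous.
-/

open scoped Manifold

open Filter Set Topology

section LieGroup

variable {𝕜 : Type*} [NontriviallyNormedField 𝕜] {E : Type*} [NormedAddCommGroup E]
  [NormedSpace 𝕜 E] {H : Type*} [TopologicalSpace H] {I : ModelWithCorners 𝕜 E H}
  {G : Type*} [TopologicalSpace G] [ChartedSpace H G] [Monoid G] {n : WithTop ℕ∞}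
  [ContMDiffMul I n G]

theorem hasMFDerivAt_mul_one_one (hn : n ≠ 0) :
    HasMFDerivAt (I.prod I) I (fun p : G × G => p.1 * p.2) (1, 1)
      (ContinuousLinearMap.fst 𝕜 E E + ContinuousLinearMap.snd 𝕜 E E) := by
  have hmul := (contMDiff_mul I n (G := G)).mdifferentiableAt (x := (1, 1)) hn
  have hright : mfderiv I I (fun x : G => x * 1) 1 = ContinuousLinearMap.id 𝕜 E :=
    ((hasMFDerivAt_id (I := I) (1 : G)).congr_of_eventuallyEq
      (Eventually.of_forall mul_one)).mfderiv
  have hleft : mfderiv I I (fun x : G => 1 * x) 1 = ContinuousLinearMap.id 𝕜 E :=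
    ((hasMFDerivAt_id (I := I) (1 : G)).congr_of_eventuallyEq
      (Eventually.of_forall one_mul)).mfderiv
  refine hmul.hasMFDerivAt.congr_mfderiv (ContinuousLinearMap.ext fun v => ?_)
  rw [mfderiv_prod_eq_add_apply hmul, hright, hleft]
  rfl

theorem hasMFDerivAt_pow_one (hn : n ≠ 0) (k : ℕ) :
    HasMFDerivAt I I (fun x : G => x ^ k) 1 ((k : 𝕜) • ContinuousLinearMap.id 𝕜 E) := by
  induction k with
  | zero =>
    refine ((hasMFDerivAt_const (I := I) (I' := I) (1 : G) (1 : G)).congr_of_eventuallyEq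
      (Eventually.of_forall pow_zero)).congr_mfderiv ?_
    rw [Nat.cast_zero, zero_smul]
    rfl
  | succ k ih =>
    -- stated for every `y = 1`: the chain rule below evaluates at `(1 ^ k, 1)`
    have hmul : ∀ y : G, y = 1 → HasMFDerivAt (I.prod I) I (fun p : G × G => p.1 * p.2) (y, 1)
        (ContinuousLinearMap.fst 𝕜 E E + ContinuousLinearMap.snd 𝕜 E E) := by
      rintro _ rfl
      exact hasMFDerivAt_mul_one_one hn
    refine (((hmul _ (one_pow k)).comp (f := fun x : G => (x ^ k, x)) 1
      (ih.prodMk (hasMFDerivAt_id 1))).congr_of_eventuallyEq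
      (Eventually.of_forall fun x => pow_succ x k)).congr_mfderiv
      (ContinuousLinearMap.ext fun v => ?_)
    show (k : 𝕜) • v + v = ((k + 1 : ℕ) : 𝕜) • v
    push_cast
    module

end LieGroup

theorem ContMDiffAt.map_nhds_eq_of_hasMFDerivAt {𝕜 : Type*} [RCLike 𝕜] {E F : Type*}
    [NormedAddCommGroup E] [NormedSpace 𝕜 E] [CompleteSpace E]
    [NormedAddCommGroup F] [NormedSpace 𝕜 F] {M N : Type*} [TopologicalSpace M]
    [ChartedSpace E M] [TopologicalSpace N] [ChartedSpace F N] {n : WithTop ℕ∞}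
    {f : M → N} {x : M} {f' : E ≃L[𝕜] F} (hf : ContMDiffAt 𝓘(𝕜, E) 𝓘(𝕜, F) n f x)
    (hn : n ≠ 0) (hf' : HasMFDerivAt 𝓘(𝕜, E) 𝓘(𝕜, F) f x (f' : E →L[𝕜] F)) :
    map f (𝓝 x) = 𝓝 (f x) := by
  set φ := extChartAt 𝓘(𝕜, E) x
  set ψ := extChartAt 𝓘(𝕜, F) (f x)
  set g := writtenInExtChartAt 𝓘(𝕜, E) 𝓘(𝕜, F) x f
  have hg : HasStrictFDerivAt g (f' : E →L[𝕜] F) (φ x) := by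
    have hcd := (contMDiffAt_iff.1 hf).2
    have hd := hf'.2
    simp only [modelWithCornersSelf_coe, range_id, contDiffWithinAt_univ] at hcd hd
    exact hcd.hasStrictFDerivAt' (hasFDerivWithinAt_univ.1 hd) hn
  have hgx : g (φ x) = ψ (f x) := by
    show ψ (f (φ.symm (φ x))) = ψ (f x)
    rw [extChartAt_to_inv]
  have hev : f =ᶠ[𝓝 x] ψ.symm ∘ g ∘ φ := by
    filter_upwards [extChartAt_source_mem_nhds (I := 𝓘(𝕜, E)) x,
      hf.continuousAt.preimage_mem_nhds (extChartAt_source_mem_nhds (I := 𝓘(𝕜, F)) (f x))]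
      with y hy hfy
    show f y = ψ.symm (ψ (f (φ.symm (φ y))))
    rw [φ.left_inv hy, ψ.left_inv hfy]
  have hψ : map ψ.symm (𝓝 (ψ (f x))) = 𝓝 (f x) := by
    have := map_extChartAt_symm_nhdsWithin_range (I := 𝓘(𝕜, F)) (f x)
    rwa [ModelWithCorners.range_eq_univ, nhdsWithin_univ] at this
  calc map f (𝓝 x) = map ψ.symm (map g (map φ (𝓝 x))) := by
        rw [map_congr hev, map_map, map_map]; rfl
    _ = 𝓝 (f x) := by
        rw [map_extChartAt_nhds_of_boundaryless, hg.map_nhds_eq_of_equiv, hgx, hψ]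

theorem map_pow_nhds_one {𝕜 : Type*} [RCLike 𝕜] {E : Type*} [NormedAddCommGroup E]
    [NormedSpace 𝕜 E] [CompleteSpace E] {G : Type*} [TopologicalSpace G] [ChartedSpace E G]
    [Monoid G] {n : WithTop ℕ∞} [ContMDiffMul 𝓘(𝕜, E) n G] (hn : n ≠ 0) {k : ℕ} (hk : k ≠ 0) :
    map (fun x : G => x ^ k) (𝓝 1) = 𝓝 1 := by
  have hk' : (k : 𝕜) ≠ 0 := Nat.cast_ne_zero.2 hk
  have hpow : HasMFDerivAt 𝓘(𝕜, E) 𝓘(𝕜, E) (fun x : G => x ^ k) 1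
      ((ContinuousLinearEquiv.smulLeft (Units.mk0 (k : 𝕜) hk') : E ≃L[𝕜] E) : E →L[𝕜] E) :=
    (hasMFDerivAt_pow_one hn k).congr_mfderiv (by ext v; rfl)
  simpa using ((contMDiff_pow k).contMDiffAt (x := (1 : G))).map_nhds_eq_of_hasMFDerivAt hn hpow

namespace Subgroup

theorem connectedComponentOfOne_le_of_mem_nhds {G : Type*} [TopologicalSpace G] [Group G]
    [IsTopologicalGroup G] {U : Subgroup G} (hU : (U : Set G) ∈ 𝓝 1) :
    connectedComponentOfOne G ≤ U :=
  have hopen := U.isOpen_of_mem_nhds hU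
  IsClopen.connectedComponent_subset ⟨U.isClosed_of_isOpen hopen, hopen⟩ U.one_mem

theorem surjective_pow_connectedComponentOfOne {G : Type*} [TopologicalSpace G] [CommGroup G]
    [IsTopologicalGroup G] (hG : IsOpen (connectedComponentOfOne G : Set G)) {k : ℕ}
    (hk : 𝓝 1 ≤ Filter.map (fun x : G => x ^ k) (𝓝 1)) :
    Function.Surjective fun x : connectedComponentOfOne G => x ^ k := by
  set Γ := connectedComponentOfOne G
  have hpow : (Γ.map (powMonoidHom k) : Set G) ∈ 𝓝 1 :=
    hk (image_mem_map (hG.mem_nhds Γ.one_mem))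
  intro y
  obtain ⟨x, hx, hxy⟩ := connectedComponentOfOne_le_of_mem_nhds hpow y.2
  exact ⟨⟨x, hx⟩, Subtype.ext hxy⟩

theorem exists_retraction_of_surjective_pow {G : Type*} [CommGroup G] (H : Subgroup G)
    (hH : ∀ k : ℕ, k ≠ 0 → Function.Surjective fun x : H => x ^ k) :
    ∃ r : G →* H, ∀ x : H, r x = x := by
  let _ : DivisibleBy (Additive H) ℕ := divisibleByOfSMulRightSurj _ _ fun hk => hH _ hk
  let _ : DivisibleBy (Additive H) ℤ := AddGroup.divisibleByIntOfDivisibleByNat _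
  obtain ⟨r, hr⟩ := (Module.Baer.of_divisible (A := Additive H)).extension_property_addMonoidHom
    (MonoidHom.toAdditive H.subtype) Subtype.val_injective (AddMonoidHom.id _)
  exact ⟨MonoidHom.toAdditive.symm r, fun x => DFunLike.congr_fun hr (Additive.ofMul x)⟩

section Retraction

variable {G : Type*} [CommGroup G] (H : Subgroup G) (r : G →* H) (hr : ∀ x : H, r x = x)

def quotientSection : G ⧸ H →* G :=
  QuotientGroup.lift H (MonoidHom.id G / H.subtype.comp r) fun x hx => by
    simp [hr ⟨x, hx⟩]

theorem quotientSection_mk (x : G) : quotientSection H r hr x = x / r x := rfl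

def prodQuotientEquivOfRetraction : H × (G ⧸ H) ≃* G :=
  MonoidHom.toMulEquiv (H.subtype.coprod (quotientSection H r hr)) (r.prod (QuotientGroup.mk' H))
    (by
      refine MonoidHom.ext fun ⟨h, q⟩ => ?_
      induction q using QuotientGroup.induction_on with | H x => ?_
      ext
      · simp [quotientSection_mk, hr]
      · simp [quotientSection_mk, (QuotientGroup.eq_one_iff (h : G)).2 h.2,
          (QuotientGroup.eq_one_iff (r x : G)).2 (r x).2])
    (by
      ext x
      simp [quotientSection_mk])

variable [TopologicalSpace G] [IsTopologicalGroup G] (hH : IsOpen (H : Set G))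
include hH

theorem continuous_quotientSection : Continuous (quotientSection H r hr) :=
  haveI := QuotientGroup.discreteTopology hH
  continuous_of_discreteTopology

theorem continuous_prodQuotientEquivOfRetraction :
    Continuous (prodQuotientEquivOfRetraction H r hr) :=
  (continuous_subtype_val.comp continuous_fst).mul
    ((continuous_quotientSection H r hr hH).comp continuous_snd)

theorem continuous_prodQuotientEquivOfRetraction_symm :
    Continuous (prodQuotientEquivOfRetraction H r hr).symm := by
  have hr_eq : ∀ x : G, (r x : G) = x / quotientSection H r hr x := fun x => by
    simp [quotientSection_mk]
  refine Continuous.prodMk (continuous_induced_rng.2 ?_) QuotientGroup.continuous_mk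
  simp only [Function.comp_def, hr_eq]
  exact continuous_id.div' ((continuous_quotientSection H r hr hH).comp QuotientGroup.continuous_mk)

end Retraction

end Subgroup

theorem compact_abelian_lie_group_splits_identity_component_general
    {EK : Type*} [NormedAddCommGroup EK] [NormedSpace ℝ EK] [FiniteDimensional ℝ EK]
    {K : Type*} [TopologicalSpace K] [ChartedSpace EK K] [CommGroup K]
    [IsTopologicalGroup K] [LieGroup (𝓘(ℝ, EK)) (⊤ : ℕ∞) K] :
    ∃ e : (Subgroup.connectedComponentOfOne K × (K ⧸ Subgroup.connectedComponentOfOne K)) ≃* K,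
      Continuous e ∧ Continuous e.symm := by
  set Γ := Subgroup.connectedComponentOfOne K
  have hΓ : IsOpen (Γ : Set K) :=
    haveI := ChartedSpace.locallyConnectedSpace EK K
    isOpen_connectedComponent
  obtain ⟨r, hr⟩ := Γ.exists_retraction_of_surjective_pow fun k hk =>
    Subgroup.surjective_pow_connectedComponentOfOne hΓ
      (map_pow_nhds_one (𝕜 := ℝ) (E := EK) (n := (⊤ : ℕ∞)) (by simp) hk).ge
  exact ⟨Γ.prodQuotientEquivOfRetraction r hr,
    Γ.continuous_prodQuotientEquivOfRetraction r hr hΓ,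
    Γ.continuous_prodQuotientEquivOfRetraction_symm r hr hΓ⟩

theorem compact_abelian_lie_group_splits_identity_component
    {EK : Type*} [NormedAddCommGroup EK] [NormedSpace ℝ EK] [FiniteDimensional ℝ EK]
    {K : Type*} [TopologicalSpace K] [ChartedSpace EK K] [CommGroup K]
    [IsTopologicalGroup K] [LieGroup (𝓘(ℝ, EK)) (⊤ : ℕ∞) K] [CompactSpace K] :
    ∃ e : (Subgroup.connectedComponentOfOne K × (K ⧸ Subgroup.connectedComponentOfOne K)) ≃* K,
      Continuous e ∧ Continuous e.symm :=
  compact_abelian_lie_group_splits_identity_component_general (EK := EK)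
end

section
/- Let Γ be a compact topological group, A a locally compact Hausdorff space, and ℐ a weakly locally maximal (Γ,A)-groupoid. Then: (i) there exists a split Γ-space (Y,ϖ,φ) over A whose isotropy groupoid is ℐ, and Y is locally compact; (ii) if (X,π,φ) and (X′,π′,φ′) are two split Γ-spaces over A with isotropy groupoid ℐ and X, X′ are locally compact, then there is a unique Γ-equivariant homeomorphism F: X → X′ with φ′ = F ∘ φ. -/
/-!
Common definitions for formalizing Hambleton–Hausmann, *Equivariant bundles and
isotropy representations*: `(Γ,A)`-groupoids, split `Γ`-spaces, equivariant
principal `G`-bundles, CW structures, and (cellular) representations.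
-/

open Metric Set

namespace EqvBdl

section Groupoid

variable {Γ : Type*} [Group Γ] [TopologicalSpace Γ] {A : Type*} [TopologicalSpace A]

/-- The stalk (slice) of a subset `I ⊆ Γ × A` over a point `a : A`. -/
def slice (I : Set (Γ × A)) (a : A) : Set Γ := {γ : Γ | (γ, a) ∈ I}

/-- A `(Γ,A)`-groupoid: a subspace of `Γ × A` each of whose slices is a closed
subgroup of `Γ`. -/
structure IsGAGroupoid (I : Set (Γ × A)) : Prop where
  one_mem : ∀ a : A, (1 : Γ) ∈ slice I a
  mul_mem : ∀ a : A, ∀ γ ∈ slice I a, ∀ δ ∈ slice I a, γ * δ ∈ slice I a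
  inv_mem : ∀ a : A, ∀ γ ∈ slice I a, γ⁻¹ ∈ slice I a
  isClosed_slice : ∀ a : A, IsClosed (slice I a)

/-- A `(Γ,A)`-groupoid is weakly locally maximal if every point has a neighbourhood
on which all slices are subgroups of the slice at the point. -/
def WeaklyLocallyMaximal (I : Set (Γ × A)) : Prop :=
  ∀ a : A, ∃ U ∈ nhds a, ∀ u ∈ U, slice I u ⊆ slice I a

/-- A `(Γ,A)`-groupoid is locally maximal if each point `a` and each neighbourhood `B`
of `a` admit an open set `a ∈ U ⊆ B` together with a homotopy `ρ_t : U → U` with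
`ρ₀ = id`, `ρ₁ ≡ a` and `ℐ_u ⊆ ℐ_{ρ_t(u)}`. -/
def LocallyMaximalGroupoid (I : Set (Γ × A)) : Prop :=
  ∀ a : A, ∀ B ∈ nhds a, ∃ U : Set A, IsOpen U ∧ a ∈ U ∧ U ⊆ B ∧
    ∃ ρ : ℝ → A → A,
      ContinuousOn (fun q : ℝ × A => ρ q.1 q.2) (Icc (0 : ℝ) 1 ×ˢ U) ∧
      (∀ t ∈ Icc (0 : ℝ) 1, ∀ u ∈ U, ρ t u ∈ U) ∧
      (∀ u ∈ U, ρ 0 u = u) ∧ (∀ u ∈ U, ρ 1 u = a) ∧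
      (∀ t ∈ Icc (0 : ℝ) 1, ∀ u ∈ U, slice I u ⊆ slice I (ρ t u))

/-- "No small subgroups" relative to a subset `H ⊆ Γ`: there is a neighbourhood of `1`
such that the only subgroup of `Γ` contained in `H` and in this neighbourhood is trivial.
By the Gleason–Yamabe theorem, a compact (Hausdorff) topological group is a Lie group
iff it has no small subgroups; we use this to say that a slice is a compact Lie group. -/
def HasNoSmallSubgroupsIn (H : Set Γ) : Prop :=
  ∃ U ∈ nhds (1 : Γ), ∀ K : Subgroup Γ, (K : Set Γ) ⊆ H ∩ U → K = ⊥

end Groupoid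

/-- A split `Γ`-space over `A`: a `Γ`-space `X` with a continuous surjection
`proj : X → A` whose fibers are exactly the `Γ`-orbits, and a continuous
section `sec` of `proj`. -/
structure SplitGSpace (Γ : Type*) [Group Γ] [TopologicalSpace Γ]
    (A : Type*) [TopologicalSpace A] (X : Type*) [TopologicalSpace X] where
  smul : Γ → X → X
  one_smul : ∀ x : X, smul 1 x = x
  mul_smul : ∀ γ δ : Γ, ∀ x : X, smul (γ * δ) x = smul γ (smul δ x)
  continuous_smul : Continuous fun q : Γ × X => smul q.1 q.2
  proj : X → A
  sec : A → X
  continuous_proj : Continuous proj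
  continuous_sec : Continuous sec
  proj_sec : ∀ a : A, proj (sec a) = a
  proj_eq_iff : ∀ x y : X, proj x = proj y ↔ ∃ γ : Γ, y = smul γ x

namespace SplitGSpace

variable {Γ : Type*} [Group Γ] [TopologicalSpace Γ] {A : Type*} [TopologicalSpace A]
  {X : Type*} [TopologicalSpace X]

/-- The isotropy groupoid of a split `Γ`-space: `{(γ,a) | γ · φ(a) = φ(a)}`. -/
def isotropy (S : SplitGSpace Γ A X) : Set (Γ × A) :=
  {q : Γ × A | S.smul q.1 (S.sec q.2) = S.sec q.2}

end SplitGSpace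

section Bundles

variable {Γ : Type*} [Group Γ] [TopologicalSpace Γ] {A : Type*} [TopologicalSpace A]
  {X : Type*} [TopologicalSpace X]

/-- A trivialization of the data `(p, rsmul)` of a principal `G`-bundle over an
open set `U`: a `G`-equivariant fiber coordinate `τ` such that `(p, τ)` is a
homeomorphism from `p⁻¹(U)` onto `U × G` (with continuous inverse `σ`). -/
def TrivializesOver {G : Type*} [Group G] [TopologicalSpace G]
    {E : Type*} [TopologicalSpace E]
    (p : E → X) (rsmul : E → G → E) (U : Set X) : Prop :=
  ∃ τ : E → G, ContinuousOn τ (p ⁻¹' U) ∧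
    (∀ z ∈ p ⁻¹' U, ∀ g : G, τ (rsmul z g) = τ z * g) ∧
    ∃ σ : X × G → E, ContinuousOn σ (U ×ˢ (univ : Set G)) ∧
      (∀ z ∈ p ⁻¹' U, σ (p z, τ z) = z) ∧
      ∀ q : X × G, q.1 ∈ U → p (σ q) = q.1 ∧ τ (σ q) = q.2

/-- A `Γ`-equivariant principal `G`-bundle over the split `Γ`-space `S`:
a locally trivial principal (right, free) `G`-bundle `p : E → X` with a left
`Γ`-action on `E` commuting with the `G`-action, for which `p` is `Γ`-equivariant. -/
structure EqvBundle (G : Type*) [Group G] [TopologicalSpace G]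
    (S : SplitGSpace Γ A X) (E : Type*) [TopologicalSpace E] where
  p : E → X
  continuous_p : Continuous p
  rsmul : E → G → E
  rsmul_one : ∀ z : E, rsmul z 1 = z
  rsmul_mul : ∀ z : E, ∀ g h : G, rsmul z (g * h) = rsmul (rsmul z g) h
  continuous_rsmul : Continuous fun q : E × G => rsmul q.1 q.2
  rsmul_free : ∀ z : E, ∀ g : G, rsmul z g = z → g = 1
  p_rsmul : ∀ z : E, ∀ g : G, p (rsmul z g) = p z
  lsmul : Γ → E → E
  lsmul_one : ∀ z : E, lsmul 1 z = z
  lsmul_mul : ∀ γ δ : Γ, ∀ z : E, lsmul (γ * δ) z = lsmul γ (lsmul δ z)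
  continuous_lsmul : Continuous fun q : Γ × E => lsmul q.1 q.2
  lsmul_rsmul : ∀ γ : Γ, ∀ z : E, ∀ g : G, lsmul γ (rsmul z g) = rsmul (lsmul γ z) g
  p_lsmul : ∀ γ : Γ, ∀ z : E, p (lsmul γ z) = S.smul γ (p z)
  locTriv : ∀ x : X, ∃ U : Set X, IsOpen U ∧ x ∈ U ∧ TrivializesOver p rsmul U

variable {G : Type*} [Group G] [TopologicalSpace G] {S : SplitGSpace Γ A X}
  {E E' : Type*} [TopologicalSpace E] [TopologicalSpace E']

/-- `φt` is a continuous lift of the section of `S` through the bundle `η`;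
the existence of such a lift is equivalent to triviality of the pull-back
of `η` by the section, i.e. to `η` being a split bundle. -/
def IsLift (η : EqvBundle G S E) (φt : A → E) : Prop :=
  Continuous φt ∧ ∀ a : A, η.p (φt a) = S.sec a

/-- `α` is the isotropy representation of the split bundle `η` with respect to the
lift `φt`, i.e. `γ · φt(a) = φt(a) · α(γ,a)` for all `(γ,a)` in the isotropy groupoid. -/
def IsIsotropyRep (η : EqvBundle G S E) (φt : A → E) (α : Γ × A → G) : Prop :=
  ∀ a : A, ∀ γ : Γ, (γ, a) ∈ S.isotropy → η.lsmul γ (φt a) = η.rsmul (φt a) (α (γ, a))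

/-- For abelian `G`, the isotropy representation of any (not necessarily split)
equivariant bundle, defined via local lifts of the section. -/
def IsLocIsotropyRep (η : EqvBundle G S E) (α : Γ × A → G) : Prop :=
  ∀ a : A, ∃ U ∈ nhds a, ∃ φt : A → E, ContinuousOn φt U ∧
    (∀ u ∈ U, η.p (φt u) = S.sec u) ∧
    ∀ u ∈ U, ∀ γ ∈ slice S.isotropy u, η.lsmul γ (φt u) = η.rsmul (φt u) (α (γ, u))

/-- Isomorphism of `Γ`-equivariant principal `G`-bundles over the identity of `X`. -/
def BundleIso (η : EqvBundle G S E) (η' : EqvBundle G S E') : Prop :=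
  ∃ F : E ≃ₜ E', (∀ z : E, η'.p (F z) = η.p z) ∧
    (∀ z : E, ∀ g : G, F (η.rsmul z g) = η'.rsmul (F z) g) ∧
    ∀ γ : Γ, ∀ z : E, F (η.lsmul γ z) = η'.lsmul γ (F z)

/-- A numerable bundle: it admits a trivializing open cover together with a
subordinate partition of unity. -/
def IsNumerable (η : EqvBundle G S E) : Prop :=
  ∃ (ι : Type) (U : ι → Set X) (pou : PartitionOfUnity ι X Set.univ),
    (∀ i : ι, IsOpen (U i) ∧ TrivializesOver η.p η.rsmul (U i)) ∧ pou.IsSubordinate U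

end Bundles

section Reps

variable {Γ : Type*} [Group Γ] [TopologicalSpace Γ] {A : Type*} [TopologicalSpace A]
  {G : Type*} [Group G] [TopologicalSpace G]

/-- A continuous representation of the `(Γ,A)`-groupoid `I` in `G`: a map,
continuous on `I`, restricting to a group homomorphism on each slice. -/
structure IsContRep (I : Set (Γ × A)) (α : Γ × A → G) : Prop where
  cont : ContinuousOn α I
  map_mul : ∀ a : A, ∀ γ ∈ slice I a, ∀ δ ∈ slice I a, α (γ * δ, a) = α (γ, a) * α (δ, a)

/-- A representation `α` of `I` in `G` is locally maximal if every point `a` has a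
neighbourhood `U` with `ℐ_u ⊆ ℐ_a` for `u ∈ U` and a continuous `g : U → G` with
`α_u(γ) = g(u) α_a(γ) g(u)⁻¹` for all `u ∈ U`, `γ ∈ ℐ_u`. -/
def RepLocallyMaximal (I : Set (Γ × A)) (α : Γ × A → G) : Prop :=
  ∀ a : A, ∃ U ∈ nhds a, (∀ u ∈ U, slice I u ⊆ slice I a) ∧
    ∃ g : A → G, ContinuousOn g U ∧
      ∀ u ∈ U, ∀ γ ∈ slice I u, α (γ, u) = g u * α (γ, a) * (g u)⁻¹

/-- Conjugacy of representations of `I` in `G` by a continuous map `ψ : A → G`. -/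
def RepConj (I : Set (Γ × A)) (α α' : Γ × A → G) : Prop :=
  ∃ ψ : A → G, Continuous ψ ∧ ∀ q ∈ I, α' q = (ψ q.2)⁻¹ * α q * ψ q.2

end Reps

/-- A CW structure on the space `A`: a set of cells with characteristic maps from
euclidean disks, such that the open cells partition `A`, characteristic maps are
injective on the open disk and send the boundary sphere to lower-dimensional cells,
the closure of each cell meets only finitely many cells (closure finiteness), and
`A` carries the weak topology determined by the closed cells. -/
structure CWStruct (A : Type*) [TopologicalSpace A] where
  cell : Type*
  dim : cell → ℕ
  charMap : (e : cell) → EuclideanSpace ℝ (Fin (dim e)) → A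
  continuousOn_charMap : ∀ e : cell, ContinuousOn (charMap e) (closedBall 0 1)
  cellOf : A → cell
  cellOf_charMap : ∀ e : cell, ∀ x ∈ ball (0 : EuclideanSpace ℝ (Fin (dim e))) 1,
    cellOf (charMap e x) = e
  charMap_surj : ∀ a : A, ∃ x ∈ ball (0 : EuclideanSpace ℝ (Fin (dim (cellOf a)))) 1,
    charMap (cellOf a) x = a
  injOn_ball : ∀ e : cell, InjOn (charMap e) (ball 0 1)
  sphere_dim_lt : ∀ e : cell, ∀ x ∈ sphere (0 : EuclideanSpace ℝ (Fin (dim e))) 1,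
    dim (cellOf (charMap e x)) < dim e
  closure_finite : ∀ e : cell,
    {f : cell | ∃ x ∈ closedBall (0 : EuclideanSpace ℝ (Fin (dim e))) 1,
      cellOf (charMap e x) = f}.Finite
  weak_topology : ∀ s : Set A,
    IsClosed s ↔ ∀ e : cell, IsClosed (charMap e ⁻¹' s ∩ closedBall 0 1)

namespace CWStruct

variable {A : Type*} [TopologicalSpace A]

/-- The open cell of `e`. -/
def openCell (C : CWStruct A) (e : C.cell) : Set A := C.charMap e '' ball 0 1

/-- The closed cell of `e`. -/
def closedCell (C : CWStruct A) (e : C.cell) : Set A := C.charMap e '' closedBall 0 1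

/-- The center point of the cell `e` (a chosen point of the open cell). -/
def center (C : CWStruct A) (e : C.cell) : A := C.charMap e 0

/-- The face relation on cells: `f ≤ e` iff the open cell of `f` meets the
closed cell of `e`. -/
def Face (C : CWStruct A) (f e : C.cell) : Prop :=
  ∃ x ∈ closedBall (0 : EuclideanSpace ℝ (Fin (C.dim e))) 1, C.cellOf (C.charMap e x) = f

/-- A graph is a CW-complex of dimension at most 1. -/
def IsGraph (C : CWStruct A) : Prop := ∀ e : C.cell, C.dim e ≤ 1

/-- A regular CW-complex: characteristic maps are injective on the closed disk,
and each boundary sphere maps onto a subcomplex (a union of closed cells). -/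
def IsRegular (C : CWStruct A) : Prop :=
  ∀ e : C.cell, InjOn (C.charMap e) (closedBall 0 1) ∧
    ∀ x ∈ sphere (0 : EuclideanSpace ℝ (Fin (C.dim e))) 1,
      C.closedCell (C.cellOf (C.charMap e x)) ⊆ C.charMap e '' sphere 0 1

end CWStruct

section Cellular

variable {Γ : Type*} [Group Γ] [TopologicalSpace Γ] {A : Type*} [TopologicalSpace A]

/-- A cellular `(Γ,A)`-groupoid: locally maximal, with slices constant on the
open cells of the CW structure `C`. -/
def IsCellular (C : CWStruct A) (I : Set (Γ × A)) : Prop :=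
  LocallyMaximalGroupoid I ∧
    ∀ a b : A, C.cellOf a = C.cellOf b → slice I a = slice I b

/-- The group `ℐ(e)` attached by a cellular groupoid to a cell `e`. -/
def cellGrp (C : CWStruct A) (I : Set (Γ × A)) (e : C.cell) : Set Γ :=
  slice I (C.center e)

/-- A proper `(Γ,A)`-groupoid: a cellular groupoid all of whose slices are compact
Lie groups (compactness together with no small subgroups; by Gleason–Yamabe, a
compact Hausdorff group is Lie iff it has no small subgroups). -/
def IsProper (C : CWStruct A) (I : Set (Γ × A)) : Prop :=
  IsGAGroupoid I ∧ IsCellular C I ∧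
    ∀ a : A, IsCompact (slice I a) ∧ HasNoSmallSubgroupsIn (slice I a)

variable {G : Type*} [Group G] [TopologicalSpace G]

/-- `β` is a continuous homomorphism on the subgroup-carrier `H ⊆ Γ`. -/
structure HomOn (H : Set Γ) (β : Γ → G) : Prop where
  cont : ContinuousOn β H
  map_mul : ∀ γ ∈ H, ∀ δ ∈ H, β (γ * δ) = β γ * β δ

/-- Conjugacy of two maps on `H` by a single element of `G`. -/
def ConjOn (H : Set Γ) (β β' : Γ → G) : Prop :=
  ∃ g : G, ∀ γ ∈ H, β' γ = g⁻¹ * β γ * g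

/-- A cellular representation of the cellular groupoid `I` in `G`: a family of
continuous homomorphisms `β_e : ℐ(e) → G` with `β_e = β_f | ℐ(e)` whenever `f ≤ e`. -/
structure IsCellRep (C : CWStruct A) (I : Set (Γ × A)) (β : C.cell → Γ → G) : Prop where
  hom : ∀ e : C.cell, HomOn (cellGrp C I e) (β e)
  compat : ∀ f e : C.cell, C.Face f e → ∀ γ ∈ cellGrp C I e, β e γ = β f γ

/-- A representative family for an element of `R̄ep^G_cell(ℐ)`: a family of continuous
homomorphisms `β_e : ℐ(e) → G` satisfying the face compatibilities up to conjugacy. -/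
structure IsBarCellRep (C : CWStruct A) (I : Set (Γ × A)) (β : C.cell → Γ → G) : Prop where
  hom : ∀ e : C.cell, HomOn (cellGrp C I e) (β e)
  compat : ∀ f e : C.cell, C.Face f e → ConjOn (cellGrp C I e) (β f) (β e)

/-- The cellular representation on the `k`-skeleton. -/
structure IsCellRepLe (C : CWStruct A) (I : Set (Γ × A)) (k : ℕ) (β : C.cell → Γ → G) :
    Prop where
  hom : ∀ e : C.cell, C.dim e ≤ k → HomOn (cellGrp C I e) (β e)
  compat : ∀ f e : C.cell, C.dim e ≤ k → C.Face f e → ∀ γ ∈ cellGrp C I e, β e γ = β f γ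

/-- A `R̄ep_cell` representative family on the `k`-skeleton. -/
structure IsBarCellRepLe (C : CWStruct A) (I : Set (Γ × A)) (k : ℕ) (β : C.cell → Γ → G) :
    Prop where
  hom : ∀ e : C.cell, C.dim e ≤ k → HomOn (cellGrp C I e) (β e)
  compat : ∀ f e : C.cell, C.dim e ≤ k → C.Face f e → ConjOn (cellGrp C I e) (β f) (β e)

/-- The continuous representation associated to a cellular representation. -/
def toRep (C : CWStruct A) (β : C.cell → Γ → G) : Γ × A → G :=
  fun q => β (C.cellOf q.2) q.1

/-- The restriction of a representation at (the center of) the cell `e`. -/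
def restrictAt (C : CWStruct A) (α : Γ × A → G) (e : C.cell) : Γ → G :=
  fun γ => α (γ, C.center e)

/-- `ı([α]) = [β]` in `R̄ep^G_cell(ℐ)`: at each cell, the restriction of `α` is
conjugate to `β_e`. -/
def BarMatches (C : CWStruct A) (I : Set (Γ × A)) (α : Γ × A → G) (β : C.cell → Γ → G) :
    Prop :=
  ∀ e : C.cell, ConjOn (cellGrp C I e) (restrictAt C α e) (β e)

end Cellular

section GammaCW

variable {Γ : Type*} [Group Γ] [TopologicalSpace Γ] {A : Type*} [TopologicalSpace A]
  {X : Type*} [TopologicalSpace X]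

/-- A split `Γ`-CW-complex over `A`: a split `Γ`-space whose isotropy groupoid is
cellular, such that `A` carries the quotient topology and `X` carries the weak
topology determined by the `Γ`-cells `Γ × D^{d(e)} → X`, `(γ,x) ↦ γ·φ(σ_e(x))`. -/
def IsGammaCW (C : CWStruct A) (S : SplitGSpace Γ A X) : Prop :=
  IsCellular C S.isotropy ∧
  (∀ V : Set A, IsOpen V ↔ IsOpen (S.proj ⁻¹' V)) ∧
  ∀ W : Set X, IsOpen W ↔ ∀ e : C.cell,
    IsOpen {q : Γ × (closedBall (0 : EuclideanSpace ℝ (Fin (C.dim e))) 1) |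
      S.smul q.1 (S.sec (C.charMap e q.2.1)) ∈ W}

end GammaCW

section PlainBundles

variable {A : Type*} [TopologicalSpace A]

/-- A (non-equivariant) principal `G`-bundle over `A`. -/
structure PBundle (G : Type*) [Group G] [TopologicalSpace G]
    (A : Type*) [TopologicalSpace A] (F : Type*) [TopologicalSpace F] where
  p : F → A
  continuous_p : Continuous p
  rsmul : F → G → F
  rsmul_one : ∀ z : F, rsmul z 1 = z
  rsmul_mul : ∀ z : F, ∀ g h : G, rsmul z (g * h) = rsmul (rsmul z g) h
  continuous_rsmul : Continuous fun q : F × G => rsmul q.1 q.2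
  rsmul_free : ∀ z : F, ∀ g : G, rsmul z g = z → g = 1
  p_rsmul : ∀ z : F, ∀ g : G, p (rsmul z g) = p z
  locTriv : ∀ a : A, ∃ U : Set A, IsOpen U ∧ a ∈ U ∧ TrivializesOver p rsmul U

variable {G : Type*} [Group G] [TopologicalSpace G]
  {F F' : Type*} [TopologicalSpace F] [TopologicalSpace F']

/-- Isomorphism of principal `G`-bundles over `A`. -/
def PBundleIso (ξ : PBundle G A F) (ξ' : PBundle G A F') : Prop :=
  ∃ h : F ≃ₜ F', (∀ w : F, ξ'.p (h w) = ξ.p w) ∧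
    ∀ w : F, ∀ g : G, h (ξ.rsmul w g) = ξ'.rsmul (h w) g

variable {Γ : Type*} [Group Γ] [TopologicalSpace Γ] {X : Type*} [TopologicalSpace X]

/-- `ξ` is (a model for) the pull-back `φ*η` of the equivariant bundle `η` along
the section `φ` of the split `Γ`-space `S`. -/
def IsSecPullback {E : Type*} [TopologicalSpace E] {S : SplitGSpace Γ A X}
    (η : EqvBundle G S E) (ξ : PBundle G A F) : Prop :=
  ∃ f : F → E, Continuous f ∧ (∀ w : F, ∀ g : G, f (ξ.rsmul w g) = η.rsmul (f w) g) ∧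
    Topology.IsEmbedding (fun w : F => (ξ.p w, f w)) ∧
    Set.range (fun w : F => (ξ.p w, f w)) = {q : A × E | η.p q.2 = S.sec q.1}

/-- `η₃` is (a model for) the tensor product `η₁ ⊗ η₂` of two equivariant principal
`G`-bundles (`G` abelian): there is a quotient map `t` from the fibered product
`E₁ ×_X E₂` identifying exactly the anti-diagonal `G`-orbits. -/
def IsTensorOf {E₁ E₂ E₃ : Type*} [TopologicalSpace E₁] [TopologicalSpace E₂]
    [TopologicalSpace E₃] {S : SplitGSpace Γ A X}
    (η₁ : EqvBundle G S E₁) (η₂ : EqvBundle G S E₂) (η₃ : EqvBundle G S E₃) : Prop :=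
  ∃ t : E₁ × E₂ → E₃,
    ContinuousOn t {q : E₁ × E₂ | η₁.p q.1 = η₂.p q.2} ∧
    (∀ q : E₁ × E₂, η₁.p q.1 = η₂.p q.2 → η₃.p (t q) = η₁.p q.1) ∧
    (∀ q : E₁ × E₂, η₁.p q.1 = η₂.p q.2 → ∀ g : G,
      t (η₁.rsmul q.1 g, q.2) = η₃.rsmul (t q) g) ∧
    (∀ q : E₁ × E₂, η₁.p q.1 = η₂.p q.2 → ∀ γ : Γ,
      t (η₁.lsmul γ q.1, η₂.lsmul γ q.2) = η₃.lsmul γ (t q)) ∧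
    (∀ z : E₃, ∃ q : E₁ × E₂, η₁.p q.1 = η₂.p q.2 ∧ t q = z) ∧
    (∀ q q' : E₁ × E₂, η₁.p q.1 = η₂.p q.2 → η₁.p q'.1 = η₂.p q'.2 →
      (t q = t q' ↔ ∃ g : G, q'.1 = η₁.rsmul q.1 g ∧ q'.2 = η₂.rsmul q.2 g⁻¹)) ∧
    (∀ W : Set E₃, IsOpen W ↔
      IsOpen {q : {q : E₁ × E₂ // η₁.p q.1 = η₂.p q.2} | t q.1 ∈ W})

/-- `ξ₃` is (a model for) the tensor product `ξ₁ ⊗ ξ₂` of two principal `G`-bundles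
over `A` (`G` abelian). -/
def IsTensorOfP {F₁ F₂ F₃ : Type*} [TopologicalSpace F₁] [TopologicalSpace F₂]
    [TopologicalSpace F₃]
    (ξ₁ : PBundle G A F₁) (ξ₂ : PBundle G A F₂) (ξ₃ : PBundle G A F₃) : Prop :=
  ∃ t : F₁ × F₂ → F₃,
    ContinuousOn t {q : F₁ × F₂ | ξ₁.p q.1 = ξ₂.p q.2} ∧
    (∀ q : F₁ × F₂, ξ₁.p q.1 = ξ₂.p q.2 → ξ₃.p (t q) = ξ₁.p q.1) ∧
    (∀ q : F₁ × F₂, ξ₁.p q.1 = ξ₂.p q.2 → ∀ g : G,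
      t (ξ₁.rsmul q.1 g, q.2) = ξ₃.rsmul (t q) g) ∧
    (∀ z : F₃, ∃ q : F₁ × F₂, ξ₁.p q.1 = ξ₂.p q.2 ∧ t q = z) ∧
    (∀ q q' : F₁ × F₂, ξ₁.p q.1 = ξ₂.p q.2 → ξ₁.p q'.1 = ξ₂.p q'.2 →
      (t q = t q' ↔ ∃ g : G, q'.1 = ξ₁.rsmul q.1 g ∧ q'.2 = ξ₂.rsmul q.2 g⁻¹)) ∧
    (∀ W : Set F₃, IsOpen W ↔
      IsOpen {q : {q : F₁ × F₂ // ξ₁.p q.1 = ξ₂.p q.2} | t q.1 ∈ W})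

end PlainBundles

end EqvBdl

/-!
STATEMENT 3 (Proposition 2.1, Reconstruction): Let `Γ` be a compact topological
group, `A` a locally compact Hausdorff space, and `ℐ` a weakly locally maximal
`(Γ,A)`-groupoid. Then:
(i) there exists a split `Γ`-space `(Y,ϖ,φ)` over `A` whose isotropy groupoid is
`ℐ`, and `Y` is locally compact (Hausdorff);
(ii) if `(X,π,φ)` and `(X',π',φ')` are two split `Γ`-spaces over `A` with isotropy
groupoid `ℐ` and `X`, `X'` are locally compact Hausdorff, then there is a unique
`Γ`-equivariant homeomorphism `F : X → X'` with `φ' = F ∘ φ`.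
-/

open EqvBdl

/-! The orbit map `(γ, a) ↦ γ · φ(a)` of a split `Γ`-space `X` is onto, and its fibres are the
cosets `γ ℐ_a`. As `Γ` is compact and `X` Hausdorff it is a closed map, hence a quotient map, so
`X` is the quotient of `Γ × A` by a relation read off from the isotropy groupoid alone; this
gives uniqueness. For existence take that quotient. Weak local maximality makes `ℐ` closed in
`Γ × A`, so the quotient map is proper and the quotient inherits Hausdorffness and local
compactness from `Γ × A`. -/

open Filter Topology

section ProperQuotient

variable {X Y Z : Type*} [TopologicalSpace X] [TopologicalSpace Y] [TopologicalSpace Z]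
  {f : X → Y}

theorem IsProperMap.t2Space [T2Space X] (hf : IsProperMap f) (hsurj : f.Surjective) :
    T2Space Y := by
  have hdiag : Prod.map f f '' diagonal X = diagonal Y := by
    rw [← range_diag, ← range_diag, ← range_comp, ← hsurj.range_comp]
    rfl
  rw [t2_iff_isClosed_diagonal, ← hdiag]
  exact (hf.prodMap hf).isClosedMap _ isClosed_diagonal

theorem IsProperMap.weaklyLocallyCompactSpace [WeaklyLocallyCompactSpace X]
    (hf : IsProperMap f) (hsurj : f.Surjective) : WeaklyLocallyCompactSpace Y := by
  refine ⟨fun y => ?_⟩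
  obtain ⟨K, hK, hfib⟩ :=
    exists_compact_superset (hf.isCompact_preimage (isCompact_singleton (x := y)))
  obtain ⟨V, hV, hVK⟩ : K ∈ comap f (𝓝 y) := by
    rw [hf.isClosedMap.comap_nhds_eq hf.continuous]
    exact subset_interior_iff_mem_nhdsSet.mp hfib
  exact ⟨f '' K, hK.image hf.continuous,
    mem_of_superset hV ((hsurj.image_preimage V).symm.subset.trans (image_mono hVK))⟩

theorem Topology.IsQuotientMap.exists_homeomorph_comp_eq {p : Z → X} {q : Z → Y}
    (hp : IsQuotientMap p) (hq : IsQuotientMap q) (hpq : ∀ z z', p z = p z' ↔ q z = q z') :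
    ∃ F : X ≃ₜ Y, ∀ z, F (p z) = q z := by
  let s := Function.surjInv hp.surjective
  let s' := Function.surjInv hq.surjective
  have hF : ∀ z, q (s (p z)) = q z := fun z => (hpq _ _).mp (Function.surjInv_eq _ _)
  have hG : ∀ z, p (s' (q z)) = p z := fun z => (hpq _ _).mpr (Function.surjInv_eq _ _)
  refine ⟨⟨⟨q ∘ s, p ∘ s', ?_, ?_⟩, ?_, ?_⟩, hF⟩
  · exact hp.surjective.forall.mpr fun z => by simp only [Function.comp_apply, hF, hG]
  · exact hq.surjective.forall.mpr fun z => by simp only [Function.comp_apply, hF, hG]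
  · exact hp.continuous_iff.mpr (hq.continuous.congr fun z => (hF z).symm)
  · exact hq.continuous_iff.mpr (hp.continuous.congr fun z => (hG z).symm)

end ProperQuotient

namespace EqvBdl

theorem WeaklyLocallyMaximal.isClosed {Γ A : Type*} [TopologicalSpace Γ] [TopologicalSpace A]
    {I : Set (Γ × A)} (hwlm : WeaklyLocallyMaximal I) (hcl : ∀ a, IsClosed (slice I a)) :
    IsClosed I := by
  refine isOpen_compl_iff.mp (isOpen_iff_mem_nhds.mpr ?_)
  rintro ⟨γ, a⟩ hγ
  obtain ⟨U, hU, hsub⟩ := hwlm a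
  filter_upwards [prod_mem_nhds ((hcl a).isOpen_compl.mem_nhds hγ) hU]
  rintro ⟨δ, u⟩ ⟨hδ, hu⟩ hδu
  exact hδ (hsub u hu hδu)

variable {Γ : Type*} [Group Γ] [TopologicalSpace Γ] {A : Type*}

def cosetRel (I : Set (Γ × A)) (p q : Γ × A) : Prop :=
  p.2 = q.2 ∧ p.1⁻¹ * q.1 ∈ slice I p.2

namespace IsGAGroupoid

variable {I : Set (Γ × A)}

theorem inv_mem_iff (hI : IsGAGroupoid I) {a : A} {γ : Γ} : γ⁻¹ ∈ slice I a ↔ γ ∈ slice I a :=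
  ⟨fun h => inv_inv γ ▸ hI.inv_mem a _ h, hI.inv_mem a γ⟩

def setoid (hI : IsGAGroupoid I) : Setoid (Γ × A) where
  r := cosetRel I
  iseqv := by
    refine ⟨fun p => ⟨rfl, ?_⟩, fun ⟨h, h'⟩ => ⟨h.symm, ?_⟩, fun ⟨h, h'⟩ ⟨k, k'⟩ => ⟨h.trans k, ?_⟩⟩
    · simpa using hI.one_mem p.2
    · simpa [← h] using hI.inv_mem _ _ h'
    · have := hI.mul_mem _ _ h' _ (h ▸ k')
      rwa [mul_assoc, mul_inv_cancel_left] at this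

variable [IsTopologicalGroup Γ] [TopologicalSpace A] (hI : IsGAGroupoid I)

def splitSpace [LocallyCompactSpace Γ] : SplitGSpace Γ A (Quotient hI.setoid) where
  smul γ := Quotient.map (fun p => (γ * p.1, p.2)) fun p q ⟨h, h'⟩ =>
    ⟨h, by rwa [mul_inv_rev, mul_assoc, inv_mul_cancel_left]⟩
  one_smul := Quotient.ind fun p => by simp
  mul_smul γ δ := Quotient.ind fun p => by simp [mul_assoc]
  continuous_smul := isQuotientMap_quotient_mk'.continuous_lift_prod_right
    (continuous_quotient_mk'.comp (by fun_prop))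
  proj := Quotient.lift Prod.snd fun _ _ h => h.1
  sec a := ⟦(1, a)⟧
  continuous_proj := continuous_quot_lift _ continuous_snd
  continuous_sec := continuous_quotient_mk'.comp (by fun_prop)
  proj_sec _ := rfl
  proj_eq_iff := Quotient.ind₂ fun p q =>
    ⟨fun (h : p.2 = q.2) => ⟨q.1 * p.1⁻¹, by simp [h]⟩, fun ⟨_, h⟩ => (Quotient.exact h).1.symm⟩

theorem isotropy_splitSpace [LocallyCompactSpace Γ] : hI.splitSpace.isotropy = I := by
  ext ⟨γ, a⟩
  exact Quotient.eq.trans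
    ⟨fun h => hI.inv_mem_iff.mp (by simpa using h.2),
      fun h => ⟨rfl, by simpa using hI.inv_mem a γ h⟩⟩

variable [CompactSpace Γ]

theorem isClosedMap_mk (hIc : IsClosed I) : IsClosedMap (Quotient.mk hI.setoid) := by
  intro C hC
  refine isQuotientMap_quotient_mk'.isClosed_preimage.mp ?_
  have hsat : Quotient.mk hI.setoid ⁻¹' (Quotient.mk hI.setoid '' C) =
      Prod.snd '' {z : Γ × (Γ × A) | (z.1, z.2.2) ∈ C ∧ (z.1⁻¹ * z.2.1, z.2.2) ∈ I} := by
    ext ⟨γ, a⟩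
    constructor
    · rintro ⟨⟨δ, b⟩, hδ, h⟩
      obtain ⟨rfl, h⟩ := Quotient.exact h
      exact ⟨(δ, γ, b), ⟨hδ, h⟩, rfl⟩
    · rintro ⟨⟨δ, _, _⟩, ⟨hδ, h⟩, ⟨⟩⟩
      exact ⟨(δ, a), hδ, Quotient.sound ⟨rfl, h⟩⟩
  exact hsat ▸ isClosedMap_snd_of_compactSpace _
    ((hC.preimage (by fun_prop)).inter (hIc.preimage (by fun_prop)))

theorem isCompact_preimage_mk (y : Quotient hI.setoid) :
    IsCompact (Quotient.mk hI.setoid ⁻¹' {y}) := by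
  induction y using Quotient.ind with | _ p
  convert (hI.isClosed_slice p.2).isCompact.image (f := fun δ => (p.1 * δ, p.2)) (by fun_prop)
  ext q
  rw [mem_preimage, mem_singleton_iff, eq_comm, Quotient.eq]
  constructor
  · rintro ⟨h, h'⟩
    exact ⟨_, h', Prod.ext (mul_inv_cancel_left _ _) h⟩
  · rintro ⟨δ, hδ, rfl⟩
    exact ⟨rfl, by simpa using hδ⟩

theorem isProperMap_mk (hIc : IsClosed I) : IsProperMap (Quotient.mk hI.setoid) :=
  isProperMap_iff_isClosedMap_and_compact_fibers.mpr
    ⟨continuous_quotient_mk', hI.isClosedMap_mk hIc, hI.isCompact_preimage_mk⟩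

end IsGAGroupoid

namespace SplitGSpace

variable [TopologicalSpace A] {X X' : Type*} [TopologicalSpace X] [TopologicalSpace X']
  (S : SplitGSpace Γ A X) (S' : SplitGSpace Γ A X')

def orbitMap (p : Γ × A) : X := S.smul p.1 (S.sec p.2)

theorem continuous_orbitMap : Continuous S.orbitMap :=
  S.continuous_smul.comp (continuous_fst.prodMk (S.continuous_sec.comp continuous_snd))

theorem proj_orbitMap (p : Γ × A) : S.proj (S.orbitMap p) = p.2 :=
  ((S.proj_eq_iff _ _).mpr ⟨p.1, rfl⟩).symm.trans (S.proj_sec p.2)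

theorem surjective_orbitMap : Function.Surjective S.orbitMap := fun x =>
  let ⟨γ, hγ⟩ := (S.proj_eq_iff _ x).mp (S.proj_sec (S.proj x))
  ⟨(γ, S.proj x), hγ.symm⟩

theorem inv_smul_eq_iff {γ : Γ} {x y : X} : S.smul γ⁻¹ x = y ↔ x = S.smul γ y := by
  constructor <;> rintro rfl
  · rw [← S.mul_smul, mul_inv_cancel, S.one_smul]
  · rw [← S.mul_smul, inv_mul_cancel, S.one_smul]

theorem orbitMap_eq_orbitMap_iff {p q : Γ × A} :
    S.orbitMap p = S.orbitMap q ↔ cosetRel S.isotropy p q := by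
  obtain ⟨γ, a⟩ := p
  obtain ⟨δ, b⟩ := q
  have hmem : (γ⁻¹ * δ, a) ∈ S.isotropy ↔ S.orbitMap (γ, a) = S.orbitMap (δ, a) := by
    change S.smul _ _ = _ ↔ _
    rw [S.mul_smul, inv_smul_eq_iff, eq_comm]
    rfl
  constructor
  · intro h
    obtain rfl : a = b := by simpa only [proj_orbitMap] using congrArg S.proj h
    exact ⟨rfl, hmem.mpr h⟩
  · rintro ⟨rfl : a = b, h⟩
    exact hmem.mp h

theorem smul_orbitMap (γ : Γ) (p : Γ × A) :
    S.smul γ (S.orbitMap p) = S.orbitMap (γ * p.1, p.2) :=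
  (S.mul_smul _ _ _).symm

theorem orbitMap_one (a : A) : S.orbitMap (1, a) = S.sec a :=
  S.one_smul _

theorem isClosedMap_orbitMap [CompactSpace Γ] [T2Space X] : IsClosedMap S.orbitMap := by
  intro C hC
  have himage : S.orbitMap '' C = Prod.snd '' {q : Γ × X | (q.1, S.proj q.2) ∈ C ∧
      S.orbitMap (q.1, S.proj q.2) = q.2} := by
    ext x
    constructor
    · rintro ⟨p, hp, rfl⟩
      exact ⟨(p.1, S.orbitMap p), by simpa [proj_orbitMap] using hp, rfl⟩
    · rintro ⟨⟨γ, x⟩, ⟨h1, h2⟩, rfl⟩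
      exact ⟨(γ, S.proj x), h1, h2⟩
  rw [himage]
  have hcont : Continuous fun q : Γ × X => (q.1, S.proj q.2) :=
    continuous_fst.prodMk (S.continuous_proj.comp continuous_snd)
  exact isClosedMap_snd_of_compactSpace _
    ((hC.preimage hcont).inter (isClosed_eq (S.continuous_orbitMap.comp hcont) continuous_snd))

theorem isQuotientMap_orbitMap [CompactSpace Γ] [T2Space X] : IsQuotientMap S.orbitMap :=
  S.isClosedMap_orbitMap.isQuotientMap S.continuous_orbitMap S.surjective_orbitMap

def IsHom (F : X → X') : Prop :=
  (∀ γ : Γ, ∀ x : X, F (S.smul γ x) = S'.smul γ (F x)) ∧ ∀ a : A, F (S.sec a) = S'.sec a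

theorem isHom_iff_map_orbitMap {F : X → X'} :
    S.IsHom S' F ↔ ∀ p, F (S.orbitMap p) = S'.orbitMap p := by
  refine ⟨fun ⟨hsmul, hsec⟩ p => by rw [orbitMap, hsmul, hsec, orbitMap], fun h => ⟨?_, ?_⟩⟩
  · refine fun γ => S.surjective_orbitMap.forall.mpr fun p => ?_
    rw [smul_orbitMap, h, h, smul_orbitMap]
  · exact fun a => by rw [← orbitMap_one, h, orbitMap_one]

end SplitGSpace

end EqvBdl

theorem reconstruction_of_split_space
    {Γ : Type u} [Group Γ] [TopologicalSpace Γ] [IsTopologicalGroup Γ]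
    [CompactSpace Γ] [T2Space Γ]
    {A : Type u} [TopologicalSpace A] [T2Space A] [LocallyCompactSpace A]
    (I : Set (Γ × A)) (hI : IsGAGroupoid I) (hwlm : WeaklyLocallyMaximal I) :
    (∃ (Y : Type u) (_ : TopologicalSpace Y) (S : SplitGSpace Γ A Y),
        S.isotropy = I ∧ T2Space Y ∧ LocallyCompactSpace Y) ∧
    (∀ (X : Type v) (X' : Type w) (_ : TopologicalSpace X) (_ : TopologicalSpace X')
        (S : SplitGSpace Γ A X) (S' : SplitGSpace Γ A X'),
        S.isotropy = I → S'.isotropy = I →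
        T2Space X → LocallyCompactSpace X → T2Space X' → LocallyCompactSpace X' →
        ∃ F : X ≃ₜ X',
          ((∀ γ : Γ, ∀ x : X, F (S.smul γ x) = S'.smul γ (F x)) ∧
            ∀ a : A, F (S.sec a) = S'.sec a) ∧
          ∀ F' : X ≃ₜ X',
            ((∀ γ : Γ, ∀ x : X, F' (S.smul γ x) = S'.smul γ (F' x)) ∧
              ∀ a : A, F' (S.sec a) = S'.sec a) →
            ∀ x : X, F' x = F x) := by
  have hIc : IsClosed I := hwlm.isClosed hI.isClosed_slice
  have hproper := hI.isProperMap_mk hIc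
  have : T2Space (Quotient hI.setoid) := hproper.t2Space Quotient.mk_surjective
  have : WeaklyLocallyCompactSpace (Quotient hI.setoid) :=
    hproper.weaklyLocallyCompactSpace Quotient.mk_surjective
  refine ⟨⟨_, inferInstance, hI.splitSpace, hI.isotropy_splitSpace, inferInstance, inferInstance⟩,
    fun X X' _ _ S S' hS hS' _ _ _ _ => ?_⟩
  obtain ⟨F, hF⟩ := S.isQuotientMap_orbitMap.exists_homeomorph_comp_eq S'.isQuotientMap_orbitMap
    fun p q => by rw [S.orbitMap_eq_orbitMap_iff, S'.orbitMap_eq_orbitMap_iff, hS, hS']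
  refine ⟨F, (S.isHom_iff_map_orbitMap S').mpr hF, fun F' hF' => ?_⟩
  exact S.surjective_orbitMap.forall.mpr fun p =>
    ((S.isHom_iff_map_orbitMap S').mp hF' p).trans (hF p).symm
end

section
/- Let ℐ be a proper (Γ,A)-groupoid for a topological group Γ, and let G be a compact abelian Lie group. Then the three maps ı: Rep^G(ℐ) → R̄ep^G_cell(ℐ), ȷ: Rep^G_cell(ℐ) → Rep^G(ℐ), and κ: Rep^G_cell(ℐ) → R̄ep^G_cell(ℐ) are all bijective. -/
/-!
Common definitions for formalizing Hambleton–Hausmann, *Equivariant bundles and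
isotropy representations*: `(Γ,A)`-groupoids, split `Γ`-spaces, equivariant
principal `G`-bundles, CW structures, and (cellular) representations.
-/

open Metric Set

/-!
For abelian `G` conjugation is trivial, so the three conjugacy relations become equalities and
a locally maximal representation is locally constant in the base point. Connectedness of the open
disks makes it constant on open cells, and approaching a boundary point from inside the disk gives
the face compatibilities. Conversely, a cellular representation is constant along the contracting
homotopies of the locally maximal groupoid: such a path is compact, so it meets only finitely many
cells, and near each of its points it stays in cells having the cell of that point as a face.
-/

open EqvBdl Metric Set Filter Topology

theorem IsPreconnected.apply_eq_of_eventually_eq {X Y : Type*} [TopologicalSpace X] {s : Set X}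
    (hs : IsPreconnected s) {f : X → Y} (hf : ∀ x ∈ s, ∀ᶠ y in 𝓝[s] x, f y = f x)
    {x y : X} (hx : x ∈ s) (hy : y ∈ s) : f x = f y :=
  hs.induction₂ (fun x y => f x = f y) (fun x hx => (hf x hx).mono fun _ h => h.symm)
    (fun _ _ _ _ _ _ => Eq.trans) (fun _ _ _ _ => Eq.symm) hx hy

theorem IsCompact.finite_of_forall_subset_isClosed {X : Type*} [TopologicalSpace X]
    {K D : Set X} (hK : IsCompact K) (hDK : D ⊆ K) (hD : ∀ S ⊆ D, IsClosed S) : D.Finite := by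
  by_contra hinf
  obtain ⟨x, -, hx⟩ := Set.Infinite.exists_accPt_of_subset_isCompact hinf hK hDK
  have hxcl : x ∈ closure (D \ {x}) :=
    mem_closure_iff_clusterPt.mpr (accPt_principal_iff_clusterPt.mp hx)
  rw [(hD _ sdiff_subset).closure_eq] at hxcl
  exact hxcl.2 rfl

namespace EqvBdl

namespace CWStruct

variable {A : Type*} [TopologicalSpace A] (C : CWStruct A)

theorem cellOf_center (e : C.cell) : C.cellOf (C.center e) = e :=
  C.cellOf_charMap e 0 (mem_ball_self one_pos)

theorem mem_closedCell_cellOf (a : A) : a ∈ C.closedCell (C.cellOf a) := by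
  obtain ⟨x, hx, hxa⟩ := C.charMap_surj a
  exact ⟨x, ball_subset_closedBall hx, hxa⟩

theorem isClosed_closedCell [T2Space A] (e : C.cell) : IsClosed (C.closedCell e) :=
  ((isCompact_closedBall _ _).image_of_continuousOn (C.continuousOn_charMap e)).isClosed

theorem face_cellOf_of_mem_closedCell {e : C.cell} {a : A} (ha : a ∈ C.closedCell e) :
    C.Face (C.cellOf a) e := by
  obtain ⟨x, hx, rfl⟩ := ha
  exact ⟨x, hx, rfl⟩

theorem closedCell_subset_closure_openCell (e : C.cell) :
    C.closedCell e ⊆ closure (C.openCell e) := by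
  rintro _ ⟨x, hx, rfl⟩
  have hx' : x ∈ closure (ball 0 1) := by rwa [closure_ball 0 one_ne_zero]
  exact ((C.continuousOn_charMap e x hx).mono ball_subset_closedBall).mem_closure_image hx'

theorem isClosed_of_injOn_cellOf [T1Space A] {S : Set A} (hS : InjOn C.cellOf S) :
    IsClosed S := by
  rw [C.weak_topology]
  intro e
  have hfin : (S ∩ C.closedCell e).Finite := by
    refine Finite.of_finite_image ((C.closure_finite e).subset ?_) (hS.mono inter_subset_left)
    rintro _ ⟨_, ⟨-, x, hx, rfl⟩, rfl⟩
    exact ⟨x, hx, rfl⟩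
  have hpre : C.charMap e ⁻¹' S ∩ closedBall 0 1 =
      closedBall 0 1 ∩ C.charMap e ⁻¹' (S ∩ C.closedCell e) := by
    ext x
    exact ⟨fun ⟨hxS, hx⟩ => ⟨hx, hxS, x, hx, rfl⟩, fun ⟨hx, hxS, _⟩ => ⟨hxS, hx⟩⟩
  rw [hpre]
  exact (C.continuousOn_charMap e).preimage_isClosed_of_isClosed isClosed_closedBall
    hfin.isClosed

theorem finite_cellOf_image_of_isCompact [T1Space A] {K : Set A} (hK : IsCompact K) :
    (C.cellOf '' K).Finite := by
  obtain ⟨D, hDK, hD⟩ := exists_subset_bijOn K C.cellOf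
  rw [← hD.image_eq]
  exact (hK.finite_of_forall_subset_isClosed hDK fun S hS =>
    C.isClosed_of_injOn_cellOf (hD.injOn.mono hS)).image _

theorem eventually_face_cellOf [T2Space A] {K : Set A} (hK : IsCompact K) (a : A) :
    ∀ᶠ b in 𝓝 a, b ∈ K → C.Face (C.cellOf a) (C.cellOf b) := by
  set F := {e ∈ C.cellOf '' K | ¬ C.Face (C.cellOf a) e}
  have hF : IsClosed (⋃ e ∈ F, C.closedCell e) :=
    ((C.finite_cellOf_image_of_isCompact hK).subset (sep_subset _ _)).isClosed_biUnion
      fun e _ => C.isClosed_closedCell e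
  have haF : a ∉ ⋃ e ∈ F, C.closedCell e := by
    simp only [mem_iUnion, not_exists]
    exact fun e ⟨_, hne⟩ hae => hne (C.face_cellOf_of_mem_closedCell hae)
  filter_upwards [hF.isOpen_compl.mem_nhds haF] with b hbF hbK
  by_contra hne
  exact hbF (mem_biUnion ⟨mem_image_of_mem _ hbK, hne⟩ (C.mem_closedCell_cellOf b))

end CWStruct

variable {Γ A G : Type*} [TopologicalSpace A] {C : CWStruct A} {I : Set (Γ × A)}

theorem IsCellular.slice_eq_cellGrp (hI : IsCellular C I) (a : A) :
    slice I a = cellGrp C I (C.cellOf a) :=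
  hI.2 a (C.center (C.cellOf a)) (C.cellOf_center _).symm

theorem toRep_center (β : C.cell → Γ → G) (e : C.cell) (γ : Γ) :
    toRep C β (γ, C.center e) = β e γ := by
  rw [toRep, C.cellOf_center]

variable [CommGroup G]

theorem conjOn_iff_eqOn {H : Set Γ} {β β' : Γ → G} : ConjOn H β β' ↔ EqOn β β' H :=
  ⟨fun ⟨g, hg⟩ γ hγ => by rw [hg γ hγ, mul_comm g⁻¹, inv_mul_cancel_right],
    fun h => ⟨1, fun γ hγ => by rw [h hγ, inv_one, one_mul, mul_one]⟩⟩

theorem exists_forall_conj_of_eqOn {ι : Type*} {H : ι → Set Γ} {β β' : ι → Γ → G}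
    (h : ∀ i, EqOn (β i) (β' i) (H i)) :
    ∃ g : G, ∀ i, ∀ γ ∈ H i, β' i γ = g⁻¹ * β i γ * g :=
  ⟨1, fun i γ hγ => by rw [h i hγ, inv_one, one_mul, mul_one]⟩

variable [TopologicalSpace G]

theorem repConj_iff_eqOn {α α' : Γ × A → G} : RepConj I α α' ↔ EqOn α α' I :=
  ⟨fun ⟨ψ, _, hψ⟩ q hq => by rw [hψ q hq, mul_comm (ψ q.2)⁻¹, inv_mul_cancel_right],
    fun h => ⟨fun _ => 1, continuous_const, fun q hq => by rw [h hq, inv_one, one_mul, mul_one]⟩⟩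

namespace RepLocallyMaximal

variable {α : Γ × A → G}

theorem exists_nhds_eq (hα : RepLocallyMaximal I α) (a : A) :
    ∃ U ∈ 𝓝 a, (∀ u ∈ U, slice I u ⊆ slice I a) ∧
      ∀ u ∈ U, ∀ γ ∈ slice I u, α (γ, u) = α (γ, a) := by
  obtain ⟨U, hU, hsub, g, -, hg⟩ := hα a
  refine ⟨U, hU, hsub, fun u hu γ hγ => ?_⟩
  rw [hg u hu γ hγ, mul_comm (g u), mul_inv_cancel_right]

theorem apply_eq_center (hI : IsCellular C I) (hα : RepLocallyMaximal I α) {a : A} {γ : Γ}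
    (hγ : γ ∈ slice I a) : α (γ, a) = α (γ, C.center (C.cellOf a)) := by
  set e := C.cellOf a
  have hslice : ∀ z ∈ ball (0 : EuclideanSpace ℝ (Fin (C.dim e))) 1,
      slice I (C.charMap e z) = slice I a := fun z hz => hI.2 _ _ (C.cellOf_charMap e z hz)
  have hloc : ∀ y ∈ ball (0 : EuclideanSpace ℝ (Fin (C.dim e))) 1,
      ∀ᶠ z in 𝓝[ball 0 1] y, α (γ, C.charMap e z) = α (γ, C.charMap e y) := by
    intro y hy
    obtain ⟨U, hU, -, hαU⟩ := hα.exists_nhds_eq (C.charMap e y)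
    have hcont := (C.continuousOn_charMap e y (ball_subset_closedBall hy)).mono
      ball_subset_closedBall
    filter_upwards [hcont hU, self_mem_nhdsWithin] with z hzU hz
    exact hαU _ hzU γ (by rwa [hslice z hz])
  obtain ⟨x, hx, hxa⟩ := C.charMap_surj a
  have hconst := (convex_ball (0 : EuclideanSpace ℝ (Fin (C.dim e))) 1).isPreconnected
    |>.apply_eq_of_eventually_eq hloc hx (mem_ball_self one_pos)
  rwa [hxa] at hconst

theorem apply_center_eq_of_face (hI : IsCellular C I) (hα : RepLocallyMaximal I α)
    {f e : C.cell} (hfe : C.Face f e) {γ : Γ} (hγ : γ ∈ cellGrp C I e) :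
    α (γ, C.center e) = α (γ, C.center f) := by
  obtain ⟨x, hx, rfl⟩ := hfe
  obtain ⟨U, hU, hsub, hαU⟩ := hα.exists_nhds_eq (C.charMap e x)
  obtain ⟨_, hbU, y, hy, rfl⟩ := mem_closure_iff_nhds.mp
    (C.closedCell_subset_closure_openCell e ⟨x, hx, rfl⟩) U hU
  have hcell : C.cellOf (C.charMap e y) = e := C.cellOf_charMap e y hy
  have hγy : γ ∈ slice I (C.charMap e y) := by rwa [hI.slice_eq_cellGrp, hcell]
  calc α (γ, C.center e) = α (γ, C.charMap e y) := by rw [hα.apply_eq_center hI hγy, hcell]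
    _ = α (γ, C.charMap e x) := hαU _ hbU γ hγy
    _ = _ := hα.apply_eq_center hI (hsub _ hbU hγy)

theorem eqOn_of_eqOn_restrictAt (hI : IsCellular C I) {α' : Γ × A → G}
    (hα : RepLocallyMaximal I α) (hα' : RepLocallyMaximal I α')
    (h : ∀ e, EqOn (restrictAt C α e) (restrictAt C α' e) (cellGrp C I e)) : EqOn α α' I := by
  rintro ⟨γ, a⟩ hq
  calc α (γ, a) = α (γ, C.center (C.cellOf a)) := hα.apply_eq_center hI hq
    _ = α' (γ, C.center (C.cellOf a)) := h _ (by rwa [← hI.slice_eq_cellGrp])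
    _ = α' (γ, a) := (hα'.apply_eq_center hI hq).symm

theorem eqOn_toRep_restrictAt (hI : IsCellular C I) (hα : RepLocallyMaximal I α) :
    EqOn (toRep C (restrictAt C α)) α I :=
  fun _ hq => (hα.apply_eq_center hI hq).symm

end RepLocallyMaximal

variable [Group Γ] [TopologicalSpace Γ]

theorem IsBarCellRep.isCellRep {β : C.cell → Γ → G} (hβ : IsBarCellRep C I β) :
    IsCellRep C I β :=
  ⟨hβ.hom, fun f e hfe _ hγ => (conjOn_iff_eqOn.1 (hβ.compat f e hfe) hγ).symm⟩

theorem RepLocallyMaximal.isCellRep_restrictAt (hI : IsCellular C I) {α : Γ × A → G} (hα : RepLocallyMaximal I α)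
    (hαc : IsContRep I α) : IsCellRep C I (restrictAt C α) where
  hom e :=
    ⟨hαc.cont.comp (continuous_id.prodMk continuous_const).continuousOn fun _ hγ => hγ,
      hαc.map_mul (C.center e)⟩
  compat _ _ hfe _ hγ := hα.apply_center_eq_of_face hI hfe hγ


namespace IsCellRep

variable [T2Space A] {β : C.cell → Γ → G}

theorem apply_eq_of_isPreconnected (hI : IsCellular C I) (hβ : IsCellRep C I β) {K : Set A}
    (hK : IsCompact K) (hKc : IsPreconnected K) {γ : Γ} (hγ : ∀ b ∈ K, γ ∈ slice I b)
    {a b : A} (ha : a ∈ K) (hb : b ∈ K) : β (C.cellOf a) γ = β (C.cellOf b) γ := by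
  refine hKc.apply_eq_of_eventually_eq (f := fun b => β (C.cellOf b) γ) (fun a _ => ?_) ha hb
  filter_upwards [nhdsWithin_le_nhds (C.eventually_face_cellOf hK a), self_mem_nhdsWithin]
    with b hface hbK
  exact hβ.compat _ _ (hface hbK) γ (by rw [← hI.slice_eq_cellGrp]; exact hγ b hbK)

theorem exists_nhds_eq (hI : IsCellular C I) (hβ : IsCellRep C I β) (a : A) :
    ∃ U ∈ 𝓝 a, (∀ u ∈ U, slice I u ⊆ slice I a) ∧
      ∀ u ∈ U, ∀ γ ∈ slice I u, β (C.cellOf u) γ = β (C.cellOf a) γ := by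
  obtain ⟨U, hUo, haU, -, ρ, hρc, -, hρ0, hρ1, hρslice⟩ := hI.1 a univ univ_mem
  have h0 : (0 : ℝ) ∈ Icc (0 : ℝ) 1 := left_mem_Icc.2 zero_le_one
  have h1 : (1 : ℝ) ∈ Icc (0 : ℝ) 1 := right_mem_Icc.2 zero_le_one
  refine ⟨U, hUo.mem_nhds haU, fun u hu => ?_, fun u hu γ hγ => ?_⟩
  · simpa only [hρ1 u hu] using hρslice 1 h1 u hu
  · have hpath : ContinuousOn (fun t => ρ t u) (Icc 0 1) :=
      hρc.comp (continuous_id.prodMk continuous_const).continuousOn fun _ ht => ⟨ht, hu⟩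
    have hends := hβ.apply_eq_of_isPreconnected hI (isCompact_Icc.image_of_continuousOn hpath)
      (isPreconnected_Icc.image _ hpath) (by rintro _ ⟨t, ht, rfl⟩; exact hρslice t ht u hu hγ)
      (mem_image_of_mem _ h0) (mem_image_of_mem _ h1)
    simpa only [hρ0 u hu, hρ1 u hu] using hends

theorem isContRep (hI : IsCellular C I) (hβ : IsCellRep C I β) : IsContRep I (toRep C β) where
  cont := by
    rintro ⟨γ₀, a₀⟩ hq
    obtain ⟨U, hU, hsub, hβU⟩ := hβ.exists_nhds_eq hI a₀
    have hcont : ContinuousWithinAt (fun q : Γ × A => β (C.cellOf a₀) q.1)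
        (I ∩ univ ×ˢ U) (γ₀, a₀) :=
      ((hβ.hom _).cont γ₀ (hI.slice_eq_cellGrp a₀ ▸ hq)).comp
        continuous_fst.continuousWithinAt
        fun q hq => hI.slice_eq_cellGrp a₀ ▸ hsub q.2 hq.2.2 hq.1
    rw [← continuousWithinAt_inter (prod_mem_nhds univ_mem hU)]
    exact hcont.congr (fun q hq => hβU q.2 hq.2.2 q.1 hq.1)
      (hβU a₀ (mem_of_mem_nhds hU) γ₀ hq)
  map_mul a := by
    rw [hI.slice_eq_cellGrp]
    exact (hβ.hom (C.cellOf a)).map_mul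

theorem repLocallyMaximal (hI : IsCellular C I) (hβ : IsCellRep C I β) :
    RepLocallyMaximal I (toRep C β) := fun a => by
  obtain ⟨U, hU, hsub, hβU⟩ := hβ.exists_nhds_eq hI a
  refine ⟨U, hU, hsub, fun _ => 1, continuousOn_const, fun u hu γ hγ => ?_⟩
  rw [inv_one, one_mul, mul_one]
  exact hβU u hu γ hγ

end IsCellRep

end EqvBdl

open scoped Manifold

theorem iota_jmath_kappa_bijective_abelian_general
    {Γ : Type*} [Group Γ] [TopologicalSpace Γ]
    {A : Type*} [TopologicalSpace A] [T2Space A] (C : CWStruct A)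
    (I : Set (Γ × A)) (hI : IsProper C I)
    {G : Type*} [TopologicalSpace G] [CommGroup G] :
    -- ı is surjective
    (∀ β : C.cell → Γ → G, IsBarCellRep C I β →
      ∃ α : Γ × A → G, IsContRep I α ∧ RepLocallyMaximal I α ∧ BarMatches C I α β) ∧
    -- ı is injective
    (∀ α α' : Γ × A → G,
      IsContRep I α → RepLocallyMaximal I α → IsContRep I α' → RepLocallyMaximal I α' →
      (∀ e : C.cell, ConjOn (cellGrp C I e) (restrictAt C α e) (restrictAt C α' e)) →
      RepConj I α α') ∧
    -- ȷ is surjective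
    (∀ α : Γ × A → G, IsContRep I α → RepLocallyMaximal I α →
      ∃ β : C.cell → Γ → G, IsCellRep C I β ∧ RepConj I (toRep C β) α) ∧
    -- ȷ is injective
    (∀ β β' : C.cell → Γ → G, IsCellRep C I β → IsCellRep C I β' →
      RepConj I (toRep C β) (toRep C β') →
      ∃ g : G, ∀ e : C.cell, ∀ γ ∈ cellGrp C I e, β' e γ = g⁻¹ * β e γ * g) ∧
    -- κ is surjective
    (∀ β : C.cell → Γ → G, IsBarCellRep C I β →
      ∃ β' : C.cell → Γ → G, IsCellRep C I β' ∧
        ∀ e : C.cell, ConjOn (cellGrp C I e) (β' e) (β e)) ∧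
    -- κ is injective
    (∀ β β' : C.cell → Γ → G, IsCellRep C I β → IsCellRep C I β' →
      (∀ e : C.cell, ConjOn (cellGrp C I e) (β e) (β' e)) →
      ∃ g : G, ∀ e : C.cell, ∀ γ ∈ cellGrp C I e, β' e γ = g⁻¹ * β e γ * g) := by
  obtain ⟨-, hcell, -⟩ := hI
  refine ⟨fun β hβ => ?_, fun α α' _ hα _ hα' h => ?_, fun α hα hαm => ?_,
    fun β β' _ _ h => ?_, fun β hβ => ?_, fun β β' _ _ h => ?_⟩
  · exact ⟨toRep C β, hβ.isCellRep.isContRep hcell, hβ.isCellRep.repLocallyMaximal hcell,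
      fun e => conjOn_iff_eqOn.2 fun γ _ => toRep_center β e γ⟩
  · exact repConj_iff_eqOn.2
      (hα.eqOn_of_eqOn_restrictAt hcell hα' fun e => conjOn_iff_eqOn.1 (h e))
  · exact ⟨restrictAt C α, hαm.isCellRep_restrictAt hcell hα,
      repConj_iff_eqOn.2 (hαm.eqOn_toRep_restrictAt hcell)⟩
  · refine exists_forall_conj_of_eqOn fun e γ hγ => ?_
    simpa only [toRep_center] using repConj_iff_eqOn.1 h (show (γ, C.center e) ∈ I from hγ)
  · exact ⟨β, hβ.isCellRep, fun e => conjOn_iff_eqOn.2 fun _ _ => rfl⟩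
  · exact exists_forall_conj_of_eqOn fun e => conjOn_iff_eqOn.1 (h e)

theorem iota_jmath_kappa_bijective_abelian
    {Γ : Type*} [Group Γ] [TopologicalSpace Γ] [IsTopologicalGroup Γ]
    {A : Type*} [TopologicalSpace A] [T2Space A] (C : CWStruct A)
    (I : Set (Γ × A)) (hI : IsProper C I)
    {EG : Type*} [NormedAddCommGroup EG] [NormedSpace ℝ EG] [FiniteDimensional ℝ EG]
    {G : Type*} [TopologicalSpace G] [ChartedSpace EG G] [CommGroup G]
    [IsTopologicalGroup G] [LieGroup (𝓘(ℝ, EG)) (⊤ : ℕ∞) G] [CompactSpace G] :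
    -- ı is surjective
    (∀ β : C.cell → Γ → G, IsBarCellRep C I β →
      ∃ α : Γ × A → G, IsContRep I α ∧ RepLocallyMaximal I α ∧ BarMatches C I α β) ∧
    -- ı is injective
    (∀ α α' : Γ × A → G,
      IsContRep I α → RepLocallyMaximal I α → IsContRep I α' → RepLocallyMaximal I α' →
      (∀ e : C.cell, ConjOn (cellGrp C I e) (restrictAt C α e) (restrictAt C α' e)) →
      RepConj I α α') ∧
    -- ȷ is surjective
    (∀ α : Γ × A → G, IsContRep I α → RepLocallyMaximal I α →
      ∃ β : C.cell → Γ → G, IsCellRep C I β ∧ RepConj I (toRep C β) α) ∧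
    -- ȷ is injective
    (∀ β β' : C.cell → Γ → G, IsCellRep C I β → IsCellRep C I β' →
      RepConj I (toRep C β) (toRep C β') →
      ∃ g : G, ∀ e : C.cell, ∀ γ ∈ cellGrp C I e, β' e γ = g⁻¹ * β e γ * g) ∧
    -- κ is surjective
    (∀ β : C.cell → Γ → G, IsBarCellRep C I β →
      ∃ β' : C.cell → Γ → G, IsCellRep C I β' ∧
        ∀ e : C.cell, ConjOn (cellGrp C I e) (β' e) (β e)) ∧
    -- κ is injective
    (∀ β β' : C.cell → Γ → G, IsCellRep C I β → IsCellRep C I β' →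
      (∀ e : C.cell, ConjOn (cellGrp C I e) (β e) (β' e)) →
      ∃ g : G, ∀ e : C.cell, ∀ γ ∈ cellGrp C I e, β' e γ = g⁻¹ * β e γ * g) :=
  iota_jmath_kappa_bijective_abelian_general C I hI
end
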